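/- Let θ₀ < √(d·(2+q−√(8q+q²))/2), where q := 1 − (2p−1)²/2. Then the function ℓ is convex on the interval [0, θ₀]. -/

import Mathlib

open MeasureTheory Real Set
open scoped ENNReal

noncomputable section

namespace OMDA

/-- `t_p(x)`. -/
def tp (p x : ℝ) : ℝ :=
  (p * Real.exp x - (1 - p) * Real.exp (-x)) / (p * Real.exp x + (1 - p) * Real.exp (-x))

/-- `c_p(x)`. -/
def cp (p x : ℝ) : ℝ := p * Real.exp x + (1 - p) * Real.exp (-x)

/-- The standard normal density on `ℝ`. -/
def phi1 (z : ℝ) : ℝ := Real.exp (-z ^ 2 / 2) / Real.sqrt (2 * π)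

/-- Expectation of `g Z` for `Z ∼ N(0,1)`. -/
def gexp (g : ℝ → ℝ) : ℝ := ∫ z : ℝ, g z * phi1 z

/-- The univariate population EM map `m(θ)`. -/
def m (p : ℝ) (d : ℕ) (θ : ℝ) : ℝ :=
  gexp fun z => tp p (θ * z / (1 - θ ^ 2 / d)) * z

/-- The radial negative population log-likelihood `ℓ(θ)`. -/
def ell (p : ℝ) (d : ℕ) (θ : ℝ) : ℝ :=
  (d / 2 : ℝ) * Real.log (2 * π * (1 - θ ^ 2 / d)) + ((d : ℝ) + θ ^ 2) / (2 * (1 - θ ^ 2 / d))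
    - gexp fun z => Real.log (cp p (θ * z / (1 - θ ^ 2 / d)))

/-- `q := 1 - (2p-1)²/2`. -/
def qp (p : ℝ) : ℝ := 1 - (2 * p - 1) ^ 2 / 2

/-- The initialization radius `√(d·(2+q−√(8q+q²))/2)`. -/
def θmax (p : ℝ) (d : ℕ) : ℝ :=
  Real.sqrt ((d : ℝ) * (2 + qp p - Real.sqrt (8 * qp p + qp p ^ 2)) / 2)

/-- `ρ := (1+θ₀²/d)/(1−θ₀²/d)² · (1 − (2p−1)²/2)`. -/
def ρc (p : ℝ) (d : ℕ) (θ0 : ℝ) : ℝ :=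
  (1 + θ0 ^ 2 / d) / (1 - θ0 ^ 2 / d) ^ 2 * (1 - (2 * p - 1) ^ 2 / 2)

/-- `ℝᵈ` with the Euclidean norm. -/
abbrev E (d : ℕ) := EuclideanSpace ℝ (Fin d)

/-- Density of `N(ν, σ²·I_d)` on `ℝᵈ`. -/
def gpdf (d : ℕ) (ν : E d) (σ2 : ℝ) (x : E d) : ℝ :=
  (2 * π * σ2) ^ (-(d : ℝ) / 2) * Real.exp (-‖x - ν‖ ^ 2 / (2 * σ2))

/-- Density of the mixture `(1−p)·N(ν−θ, σ²I) + p·N(ν+θ, σ²I)`. -/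
def mixPdf (p : ℝ) (d : ℕ) (ν θ : E d) (σ2 : ℝ) (x : E d) : ℝ :=
  (1 - p) * gpdf d (ν - θ) σ2 x + p * gpdf d (ν + θ) σ2 x

/-- The population EM operator `M(θ)`. -/
def Mop (p : ℝ) (d : ℕ) (θ : E d) : E d :=
  ∫ z : E d, (gpdf d 0 1 z * tp p ((inner ℝ θ z : ℝ) / (1 - ‖θ‖ ^ 2 / d))) • z

/-- KL divergence `D_KL[N(0,I_d) ∥ G(θ, σ²)]`, written via densities. -/
def klStd (p : ℝ) (d : ℕ) (θ : E d) (σ2 : ℝ) : ℝ :=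
  ∫ z : E d, gpdf d 0 1 z * Real.log (gpdf d 0 1 z / mixPdf p d 0 θ σ2 z)

/-- The standard normal cdf `Φ`. -/
def stdNormCdf (x : ℝ) : ℝ := ∫ z in Iic x, phi1 z

/-- Misclassification probability of a classifier `h` under the distribution `D`
with class-conditional laws `N(±μ, I_d)` and balanced classes. -/
def errProb (d : ℕ) (μ : E d) (h : E d → ℝ) : ℝ :=
  (1 / 2) * (∫ x in {x | h x ≠ 1}, gpdf d μ 1 x)
    + (1 / 2) * (∫ x in {x | h x ≠ -1}, gpdf d (-μ) 1 x)

/-- The measure `N(ν, I_d)` on `ℝᵈ`, via its density. -/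
def gaussMeasure (d : ℕ) (ν : E d) : Measure (E d) :=
  volume.withDensity fun x => ENNReal.ofReal (gpdf d ν 1 x)

/-- The standard Gaussian measure `N(0, I_d)`. -/
def stdGaussMeasure (d : ℕ) : Measure (E d) := gaussMeasure d 0

/-- The joint distribution `D` of `(X, Y)` on `ℝᵈ × ℝ`. -/
def Dmeas (d : ℕ) (μ : E d) : Measure (E d × ℝ) :=
  (1 / 2 : ℝ≥0∞) • ((gaussMeasure d μ).prod (Measure.dirac (1 : ℝ)))
    + (1 / 2 : ℝ≥0∞) • ((gaussMeasure d (-μ)).prod (Measure.dirac (-1 : ℝ)))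

/-- Chi-squared measure with `k` degrees of freedom. -/
def chiSqMeasure (k : ℕ) : Measure ℝ := ProbabilityTheory.gammaMeasure ((k : ℝ) / 2) (1 / 2)


section Aux
open intervalIntegral Filter

variable {p : ℝ}

lemma cp_pos (hp0 : 0 < p) (hp1 : p < 1) (x : ℝ) : 0 < cp p x := by
  have h1 : 0 < p * Real.exp x := mul_pos hp0 (Real.exp_pos x)
  have h2 : 0 < (1 - p) * Real.exp (-x) := mul_pos (by linarith) (Real.exp_pos _)
  unfold cp; linarith

lemma abs_tp_le_one (hp0 : 0 < p) (hp1 : p < 1) (x : ℝ) : |tp p x| ≤ 1 := by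
  have hc := cp_pos hp0 hp1 x
  unfold tp cp at *
  rw [abs_div, abs_of_pos hc, div_le_one hc, abs_le]
  have e1 := (Real.exp_pos x).le
  have e2 := (Real.exp_pos (-x)).le
  constructor <;> nlinarith [mul_nonneg hp0.le e1, mul_nonneg (by linarith : (0:ℝ) ≤ 1 - p) e2]

lemma hasDerivAt_cp (x : ℝ) :
    HasDerivAt (cp p) (p * Real.exp x - (1 - p) * Real.exp (-x)) x := by
  have h1 : HasDerivAt (fun y : ℝ => p * Real.exp y) (p * Real.exp x) x :=
    (Real.hasDerivAt_exp x).const_mul p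
  have h2 : HasDerivAt (fun y : ℝ => (1 - p) * Real.exp (-y))
      ((1 - p) * (Real.exp (-x) * (-1))) x :=
    ((hasDerivAt_neg x).exp.const_mul (1 - p))
  have := h1.add h2
  unfold cp
  exact this.congr_deriv (by ring)

lemma hasDerivAt_cpN (x : ℝ) :
    HasDerivAt (fun y => p * Real.exp y - (1 - p) * Real.exp (-y)) (cp p x) x := by
  have h1 : HasDerivAt (fun y : ℝ => p * Real.exp y) (p * Real.exp x) x :=
    (Real.hasDerivAt_exp x).const_mul p
  have h2 : HasDerivAt (fun y : ℝ => (1 - p) * Real.exp (-y))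
      ((1 - p) * (Real.exp (-x) * (-1))) x :=
    ((hasDerivAt_neg x).exp.const_mul (1 - p))
  have := h1.sub h2
  unfold cp
  exact this.congr_deriv (by ring)

lemma hasDerivAt_log_cp (hp0 : 0 < p) (hp1 : p < 1) (x : ℝ) :
    HasDerivAt (fun y => Real.log (cp p y)) (tp p x) x := by
  have := (hasDerivAt_cp (p := p) x).log (cp_pos hp0 hp1 x).ne'
  simpa [tp, cp] using this

lemma hasDerivAt_tp (hp0 : 0 < p) (hp1 : p < 1) (x : ℝ) :
    HasDerivAt (tp p) (1 - tp p x ^ 2) x := by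
  have hc := (cp_pos hp0 hp1 x).ne'
  have h := (hasDerivAt_cpN (p := p) x).div (hasDerivAt_cp (p := p) x) hc
  have htp : tp p = fun y => (p * Real.exp y - (1 - p) * Real.exp (-y)) / cp p y := by
    funext y; simp [tp, cp]
  rw [htp]
  refine h.congr_deriv ?_
  have h2 : tp p x = (p * Real.exp x - (1 - p) * Real.exp (-x)) / cp p x := by simp [tp, cp]
  simp only
  field_simp

lemma tp_mono (hp0 : 0 < p) (hp1 : p < 1) : Monotone (tp p) := by
  have hd : ∀ x, HasDerivAt (tp p) (1 - tp p x ^ 2) x := hasDerivAt_tp hp0 hp1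
  apply monotone_of_deriv_nonneg (fun x => (hd x).differentiableAt)
  intro x
  rw [(hd x).deriv]
  have h := abs_tp_le_one hp0 hp1 x
  nlinarith [abs_nonneg (tp p x), sq_abs (tp p x)]

lemma tp_zero (hp0 : 0 < p) (hp1 : p < 1) : tp p 0 = 2 * p - 1 := by
  unfold tp
  rw [Real.exp_zero, neg_zero, Real.exp_zero, mul_one, mul_one,
    show p + (1 - p) = 1 by ring, div_one]
  ring

lemma tp_ge (hp0 : 0 < p) (hp1 : p < 1) {x : ℝ} (hx : 0 ≤ x) : 2 * p - 1 ≤ tp p x := by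
  rw [← tp_zero hp0 hp1]
  exact tp_mono hp0 hp1 hx

lemma one_sub_tp_sq_nonneg (hp0 : 0 < p) (hp1 : p < 1) (x : ℝ) : 0 ≤ 1 - tp p x ^ 2 := by
  have h := abs_tp_le_one hp0 hp1 x
  nlinarith [abs_nonneg (tp p x), sq_abs (tp p x)]

lemma one_sub_tp_sq_le_one (x : ℝ) : 1 - tp p x ^ 2 ≤ 1 := by nlinarith [sq_nonneg (tp p x)]

lemma continuous_cp : Continuous (cp p) := by
  unfold cp; continuity

lemma continuous_tp (hp0 : 0 < p) (hp1 : p < 1) : Continuous (tp p) := by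
  unfold tp
  apply Continuous.div (by continuity)
  · exact continuous_cp (p := p)
  · exact fun x => (cp_pos hp0 hp1 x).ne'

end Aux
section Aux2
open intervalIntegral Filter MeasureTheory

lemma phi1_eq (z : ℝ) : phi1 z = (Real.sqrt (2 * π))⁻¹ * Real.exp (-(1/2) * z ^ 2) := by
  unfold phi1
  rw [show -(1/2) * z ^ 2 = -z ^ 2 / 2 by ring, div_eq_inv_mul]

lemma phi1_pos (z : ℝ) : 0 < phi1 z := by
  unfold phi1
  exact div_pos (Real.exp_pos _) (Real.sqrt_pos.2 (by positivity))

lemma continuous_phi1 : Continuous phi1 := by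
  unfold phi1; continuity

lemma integrable_phi1 : MeasureTheory.Integrable phi1 := by
  have h := (integrable_exp_neg_mul_sq (by norm_num : (0:ℝ) < 1/2)).const_mul
      (Real.sqrt (2 * π))⁻¹
  have : phi1 = fun z => (Real.sqrt (2 * π))⁻¹ * Real.exp (-(1/2) * z ^ 2) := funext phi1_eq
  rw [this]
  exact h

lemma integrable_sq_exp : MeasureTheory.Integrable (fun z : ℝ => z ^ 2 * Real.exp (-(1/2) * z ^ 2)) := by
  have h := integrable_rpow_mul_exp_neg_mul_sq (b := 1/2) (by norm_num)
    (s := ((2:ℕ):ℝ)) (by norm_num)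
  have : (fun z : ℝ => z ^ ((2:ℕ):ℝ) * Real.exp (-(1/2) * z ^ 2))
      = fun z : ℝ => z ^ 2 * Real.exp (-(1/2) * z ^ 2) := by
    funext z; rw [Real.rpow_natCast]
  rwa [this] at h

lemma integrable_sq_phi1 : MeasureTheory.Integrable (fun z : ℝ => z ^ 2 * phi1 z) := by
  have h := integrable_sq_exp.const_mul (Real.sqrt (2 * π))⁻¹
  have : (fun z : ℝ => (Real.sqrt (2 * π))⁻¹ * (z ^ 2 * Real.exp (-(1/2) * z ^ 2)))
      = fun z : ℝ => z ^ 2 * phi1 z := by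
    funext z; rw [phi1_eq]; ring
  rwa [this] at h

lemma integrable_bound (c1 c2 : ℝ) :
    MeasureTheory.Integrable (fun z : ℝ => c1 * phi1 z + c2 * (z ^ 2 * phi1 z)) :=
  (integrable_phi1.const_mul c1).add (integrable_sq_phi1.const_mul c2)

lemma integrable_of_bound {f : ℝ → ℝ} (hm : MeasureTheory.AEStronglyMeasurable f volume)
    (c1 c2 : ℝ) (h : ∀ z, |f z| ≤ c1 * phi1 z + c2 * (z ^ 2 * phi1 z)) :
    MeasureTheory.Integrable f :=
  MeasureTheory.Integrable.mono' (integrable_bound c1 c2) hm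
    (Filter.Eventually.of_forall (by simpa [Real.norm_eq_abs] using h))

lemma integral_phi1 : ∫ z : ℝ, phi1 z = 1 := by
  have : (fun z : ℝ => phi1 z) = fun z => (Real.sqrt (2 * π))⁻¹ * Real.exp (-(1/2) * z ^ 2) :=
    funext phi1_eq
  rw [this, MeasureTheory.integral_const_mul, integral_gaussian]
  rw [show π / (1/2 : ℝ) = 2 * π by ring]
  rw [inv_mul_cancel₀]
  positivity

lemma tendsto_mul_exp_atTop : Tendsto (fun z : ℝ => z * Real.exp (-(1/2) * z ^ 2)) atTop (nhds 0) := by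
  have h := rpow_mul_exp_neg_mul_sq_isLittleO_exp_neg (b := 1/2) (by norm_num) (s := 1)
  have h2 : (fun z : ℝ => z ^ (1:ℝ) * Real.exp (-(1/2) * z ^ 2))
      = fun z : ℝ => z * Real.exp (-(1/2) * z ^ 2) := by
    funext z; rw [Real.rpow_one]
  rw [h2] at h
  refine h.isBigO.trans_tendsto ?_
  have hc : Tendsto (fun x : ℝ => (1/2 : ℝ) * x) atTop atTop :=
    Tendsto.const_mul_atTop (by norm_num) tendsto_id
  have := Real.tendsto_exp_neg_atTop_nhds_zero.comp hc
  have he : (fun x : ℝ => Real.exp (-(1/2 : ℝ) * x))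
      = fun x : ℝ => Real.exp (-((1/2 : ℝ) * x)) := by
    funext x; ring_nf
  rw [he]
  exact this

lemma integral_sq_exp_eq : ∫ z : ℝ, z ^ 2 * Real.exp (-(1/2) * z ^ 2)
    = ∫ z : ℝ, Real.exp (-(1/2) * z ^ 2) := by
  set F : ℝ → ℝ := fun z => -(z * Real.exp (-(1/2) * z ^ 2)) with hF
  have hFd : ∀ z : ℝ, HasDerivAt F ((z ^ 2 - 1) * Real.exp (-(1/2) * z ^ 2)) z := by
    intro z
    have he : HasDerivAt (fun z : ℝ => Real.exp (-(1/2) * z ^ 2))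
        (Real.exp (-(1/2) * z ^ 2) * (-(1/2) * (2 * z))) z := by
      have hq : HasDerivAt (fun z : ℝ => -(1/2 : ℝ) * z ^ 2) (-(1/2) * (2 * z)) z := by
        simpa using ((hasDerivAt_pow 2 z).const_mul (-(1/2 : ℝ)))
      exact hq.exp
    have := ((hasDerivAt_id z).mul he).neg
    refine this.congr_deriv ?_
    simp
    ring
  have hint : MeasureTheory.Integrable (fun z : ℝ => (z ^ 2 - 1) * Real.exp (-(1/2) * z ^ 2)) := by
    have h0 := integrable_sq_exp.sub (integrable_exp_neg_mul_sq (by norm_num : (0:ℝ) < 1/2))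
    exact h0.congr (Filter.Eventually.of_forall fun z => by simp only [Pi.sub_apply]; ring)
  have htop : Tendsto F atTop (nhds 0) := by
    rw [hF]
    simpa only [neg_zero] using tendsto_mul_exp_atTop.neg
  have hbot : Tendsto F atBot (nhds 0) := by
    have hco : Tendsto (fun z : ℝ => (-z) * Real.exp (-(1/2) * (-z) ^ 2)) atBot (nhds 0) :=
      tendsto_mul_exp_atTop.comp tendsto_neg_atBot_atTop
    have h2 : (fun z : ℝ => (-z) * Real.exp (-(1/2) * (-z) ^ 2)) = F := by
      funext z; rw [hF]; simp only [neg_sq]; ring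
    rwa [h2] at hco
  have hIoi : ∫ z in Set.Ioi (0:ℝ), (z ^ 2 - 1) * Real.exp (-(1/2) * z ^ 2) = 0 - F 0 :=
    MeasureTheory.integral_Ioi_of_hasDerivAt_of_tendsto' (fun x _ => hFd x)
      hint.integrableOn htop
  have hIic : ∫ z in Set.Iic (0:ℝ), (z ^ 2 - 1) * Real.exp (-(1/2) * z ^ 2) = F 0 - 0 :=
    MeasureTheory.integral_Iic_of_hasDerivAt_of_tendsto
      ((hFd 0).continuousAt.continuousWithinAt) (fun x _ => hFd x)
      hint.integrableOn hbot
  have hsplit : ∫ z : ℝ, (z ^ 2 - 1) * Real.exp (-(1/2) * z ^ 2) = 0 := by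
    have := MeasureTheory.integral_add_compl (measurableSet_Iic (a := (0:ℝ))) hint
    rw [compl_Iic] at this
    rw [← this, hIic, hIoi]
    ring
  have := MeasureTheory.integral_sub integrable_sq_exp
      (integrable_exp_neg_mul_sq (by norm_num : (0:ℝ) < 1/2))
  have h2 : (fun z : ℝ => z ^ 2 * Real.exp (-(1/2) * z ^ 2) - Real.exp (-(1/2) * z ^ 2))
      = fun z : ℝ => (z ^ 2 - 1) * Real.exp (-(1/2) * z ^ 2) := by funext z; ring
  rw [h2] at this
  rw [hsplit] at this
  linarith [this]

lemma integral_sq_phi1 : ∫ z : ℝ, z ^ 2 * phi1 z = 1 := by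
  have h1 : (fun z : ℝ => z ^ 2 * phi1 z)
      = fun z => (Real.sqrt (2 * π))⁻¹ * (z ^ 2 * Real.exp (-(1/2) * z ^ 2)) := by
    funext z; rw [phi1_eq]; ring
  rw [h1, MeasureTheory.integral_const_mul, integral_sq_exp_eq, integral_gaussian,
    show π / (1/2 : ℝ) = 2 * π by ring, inv_mul_cancel₀]
  positivity

lemma integral_comp_neg_real (f : ℝ → ℝ) : ∫ z : ℝ, f (-z) = ∫ z : ℝ, f z :=
  (MeasureTheory.Measure.measurePreserving_neg (volume : MeasureTheory.Measure ℝ)).integral_comp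
    (Homeomorph.neg ℝ).measurableEmbedding f

lemma phi1_even (z : ℝ) : phi1 (-z) = phi1 z := by unfold phi1; rw [neg_pow]; norm_num

lemma integral_id_phi1 : ∫ z : ℝ, z * phi1 z = 0 := by
  have h := integral_comp_neg_real (fun z => z * phi1 z)
  have h2 : (fun z : ℝ => (-z) * phi1 (-z)) = fun z : ℝ => -(z * phi1 z) := by
    funext z; rw [phi1_even]; ring
  rw [h2] at h
  rw [MeasureTheory.integral_neg] at h
  linarith

lemma integrable_max_sq_phi1 : MeasureTheory.Integrable (fun z : ℝ => max z 0 ^ 2 * phi1 z) := by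
  apply integrable_of_bound
    ((((continuous_id'.max continuous_const).pow 2).mul continuous_phi1).aestronglyMeasurable) 0 1
  intro z
  have h1 : 0 ≤ max z 0 := le_max_right z 0
  have h2 : max z 0 ^ 2 ≤ z ^ 2 := by
    rcases le_total z 0 with h | h
    · rw [max_eq_right h]; simpa using sq_nonneg z
    · rw [max_eq_left h]
  simp only [Pi.mul_apply, Pi.pow_apply]
  rw [abs_of_nonneg (mul_nonneg (pow_nonneg (le_max_right z 0) 2) (phi1_pos z).le)]
  have := (phi1_pos z).le
  nlinarith

lemma integral_max_sq_phi1 : ∫ z : ℝ, max z 0 ^ 2 * phi1 z = 1/2 := by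
  have hswap := integral_comp_neg_real (fun z => max z 0 ^ 2 * phi1 z)
  have hkey : ∀ z : ℝ, max (-z) 0 ^ 2 * phi1 (-z) = z ^ 2 * phi1 z - max z 0 ^ 2 * phi1 z := by
    intro z
    rw [phi1_even]
    rcases le_total z 0 with h | h
    · rw [max_eq_right h, max_eq_left (by linarith : 0 ≤ -z)]; ring
    · rw [max_eq_left h, max_eq_right (by linarith : -z ≤ 0)]; ring
  have h2 : (fun z : ℝ => max (-z) 0 ^ 2 * phi1 (-z))
      = fun z : ℝ => z ^ 2 * phi1 z - max z 0 ^ 2 * phi1 z := funext hkey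
  rw [h2, MeasureTheory.integral_sub integrable_sq_phi1 integrable_max_sq_phi1,
    integral_sq_phi1] at hswap
  linarith

end Aux2
/-- `E[Z·t_p(bZ)]`. -/
noncomputable def mt (p b : ℝ) : ℝ := ∫ z : ℝ, tp p (b * z) * z * phi1 z

/-- `E[log c_p(bZ)]`. -/
noncomputable def Lam (p b : ℝ) : ℝ := ∫ z : ℝ, Real.log (cp p (b * z)) * phi1 z

section Aux3
open intervalIntegral Filter MeasureTheory

variable {p : ℝ}

lemma abs_le_one_add_sq (z : ℝ) : |z| ≤ 1 + z ^ 2 := by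
  nlinarith [sq_abs z, sq_nonneg (|z| - 1), abs_nonneg z]

lemma integrable_mt_integrand (hp0 : 0 < p) (hp1 : p < 1) (b : ℝ) :
    MeasureTheory.Integrable (fun z : ℝ => tp p (b * z) * z * phi1 z) := by
  apply integrable_of_bound ((((continuous_tp hp0 hp1).comp
    (continuous_const.mul continuous_id')).mul continuous_id').mul
    continuous_phi1).aestronglyMeasurable 1 1
  intro z
  have h1 := abs_tp_le_one hp0 hp1 (b * z)
  have h2 := (phi1_pos z).le
  have h3 := abs_le_one_add_sq z
  simp only [Pi.mul_apply, Function.comp_apply, id_eq]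
  rw [abs_mul, abs_mul, abs_of_nonneg h2]
  have h4 : |tp p (b * z)| * |z| ≤ 1 + z ^ 2 := by
    calc |tp p (b * z)| * |z| ≤ 1 * |z| :=
      mul_le_mul_of_nonneg_right h1 (abs_nonneg z)
    _ = |z| := one_mul _
    _ ≤ 1 + z ^ 2 := h3
  have h5 : |tp p (b * z)| * |z| * phi1 z ≤ (1 + z ^ 2) * phi1 z :=
    mul_le_mul_of_nonneg_right h4 h2
  linarith [h5, sq_nonneg z]

lemma abs_log_cp_le (hp0 : 0 < p) (hp1 : p < 1) (x : ℝ) :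
    |Real.log (cp p x)| ≤ |x| - Real.log (1 - p) := by
  have hc := cp_pos hp0 hp1 x
  have h1p : (0:ℝ) < 1 - p := by linarith
  have hub : Real.log (cp p x) ≤ |x| := by
    have hle : cp p x ≤ Real.exp |x| := by
      unfold cp
      have e1 : Real.exp x ≤ Real.exp |x| := Real.exp_le_exp.2 (le_abs_self x)
      have e2 : Real.exp (-x) ≤ Real.exp |x| := Real.exp_le_exp.2 (neg_le_abs x)
      nlinarith [Real.exp_pos x, Real.exp_pos (-x)]
    calc Real.log (cp p x) ≤ Real.log (Real.exp |x|) := Real.log_le_log hc hle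
    _ = |x| := Real.log_exp _
  have hlb : Real.log (1 - p) - |x| ≤ Real.log (cp p x) := by
    have hge : (1 - p) * Real.exp (-|x|) ≤ cp p x := by
      unfold cp
      have e2 : Real.exp (-|x|) ≤ Real.exp (-x) :=
        Real.exp_le_exp.2 (neg_le_neg (le_abs_self x))
      have e3 : (1 - p) * Real.exp (-|x|) ≤ (1 - p) * Real.exp (-x) :=
        mul_le_mul_of_nonneg_left e2 (by linarith)
      have e4 : 0 < p * Real.exp x := mul_pos hp0 (Real.exp_pos x)
      linarith
    have heq : Real.log (1 - p) - |x| = Real.log ((1 - p) * Real.exp (-|x|)) := by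
      rw [Real.log_mul h1p.ne' (Real.exp_pos _).ne', Real.log_exp]
      ring
    rw [heq]
    exact Real.log_le_log (by positivity) hge
  have hlogneg : Real.log (1 - p) < 0 := Real.log_neg h1p (by linarith)
  rw [abs_le]
  constructor <;> linarith

lemma integrable_logcp (hp0 : 0 < p) (hp1 : p < 1) (b : ℝ) :
    MeasureTheory.Integrable (fun z : ℝ => Real.log (cp p (b * z)) * phi1 z) := by
  apply integrable_of_bound
    (((Real.measurable_log.comp ((continuous_cp (p := p)).measurable.comp
      (measurable_const.mul measurable_id))).mul
      continuous_phi1.measurable).aestronglyMeasurable)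
    (-Real.log (1 - p) + |b|) |b|
  intro z
  simp only [Pi.mul_apply, Function.comp_apply, id_eq]
  have h2 := (phi1_pos z).le
  have h1 := abs_log_cp_le hp0 hp1 (b * z)
  have h3 : |b * z| ≤ |b| * (1 + z ^ 2) := by
    rw [abs_mul]
    exact mul_le_mul_of_nonneg_left (abs_le_one_add_sq z) (abs_nonneg b)
  rw [abs_mul, abs_of_nonneg h2]
  have h4 : |Real.log (cp p (b * z))| ≤ (-Real.log (1 - p) + |b|) + |b| * z ^ 2 := by
    nlinarith
  have h5 := mul_le_mul_of_nonneg_right h4 h2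
  calc |Real.log (cp p (b * z))| * phi1 z
      ≤ ((-Real.log (1 - p) + |b|) + |b| * z ^ 2) * phi1 z := h5
    _ = (-Real.log (1 - p) + |b|) * phi1 z + |b| * (z ^ 2 * phi1 z) := by ring

lemma hasDerivAt_tp_b (hp0 : 0 < p) (hp1 : p < 1) (z b : ℝ) :
    HasDerivAt (fun b : ℝ => tp p (b * z)) ((1 - tp p (b * z) ^ 2) * z) b :=
  by have := (hasDerivAt_tp hp0 hp1 (b * z)).comp b (hasDerivAt_mul_const z); exact this

lemma hasDerivAt_logcp_b (hp0 : 0 < p) (hp1 : p < 1) (z b : ℝ) :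
    HasDerivAt (fun b : ℝ => Real.log (cp p (b * z))) (tp p (b * z) * z) b :=
  by have := (hasDerivAt_log_cp hp0 hp1 (b * z)).comp b (hasDerivAt_mul_const z); exact this

/-- Key pointwise bound integrated over an interval of `b`s. -/
lemma tp_interval_bound (hp0 : 1/2 < p) (hp1 : p < 1) {b1 b2 : ℝ} (h0 : 0 ≤ b1)
    (h12 : b1 ≤ b2) (z : ℝ) :
    tp p (b2 * z) * z - tp p (b1 * z) * z
      ≤ (b2 - b1) * (z ^ 2 - (2 * p - 1) ^ 2 * max z 0 ^ 2) := by
  have hp0' : 0 < p := by linarith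
  have hD : ∀ b : ℝ, HasDerivAt (fun b : ℝ => tp p (b * z) * z)
      ((1 - tp p (b * z) ^ 2) * z ^ 2) b := by
    intro b
    have := (hasDerivAt_tp_b hp0' hp1 z b).mul_const z
    exact this.congr_deriv (by ring)
  have hcont : Continuous fun b : ℝ => (1 - tp p (b * z) ^ 2) * z ^ 2 := by
    have : Continuous fun b : ℝ => tp p (b * z) :=
      (continuous_tp hp0' hp1).comp (continuous_id'.mul continuous_const)
    continuity
  have heq : tp p (b2 * z) * z - tp p (b1 * z) * z
      = ∫ b in b1..b2, (1 - tp p (b * z) ^ 2) * z ^ 2 := by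
    rw [intervalIntegral.integral_eq_sub_of_hasDerivAt (fun b _ => hD b)
      (hcont.intervalIntegrable b1 b2)]
  rw [heq]
  have hmono : ∀ b ∈ Set.Icc b1 b2,
      (1 - tp p (b * z) ^ 2) * z ^ 2 ≤ z ^ 2 - (2 * p - 1) ^ 2 * max z 0 ^ 2 := by
    intro b hb
    have hb0 : 0 ≤ b := le_trans h0 hb.1
    rcases le_total 0 z with hz | hz
    · rw [max_eq_left hz]
      have hbz : 0 ≤ b * z := mul_nonneg hb0 hz
      have htp := tp_ge hp0' hp1 hbz
      have hw : 0 < 2 * p - 1 := by linarith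
      have : (2 * p - 1) ^ 2 ≤ tp p (b * z) ^ 2 := by nlinarith
      nlinarith [sq_nonneg z]
    · rw [max_eq_right hz]
      have := one_sub_tp_sq_le_one (p := p) (b * z)
      nlinarith [sq_nonneg z, one_sub_tp_sq_nonneg hp0' hp1 (b * z)]
  calc (∫ b in b1..b2, (1 - tp p (b * z) ^ 2) * z ^ 2)
      ≤ ∫ _ in b1..b2, (z ^ 2 - (2 * p - 1) ^ 2 * max z 0 ^ 2) :=
        intervalIntegral.integral_mono_on h12 (hcont.intervalIntegrable b1 b2)
          (intervalIntegrable_const) hmono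
    _ = (b2 - b1) * (z ^ 2 - (2 * p - 1) ^ 2 * max z 0 ^ 2) := by
        rw [intervalIntegral.integral_const, smul_eq_mul]

/-- Key inequality: increments of `mt` are controlled by `q`. -/
lemma mt_diff_le (hp0 : 1/2 < p) (hp1 : p < 1) {b1 b2 : ℝ} (h0 : 0 ≤ b1) (h12 : b1 ≤ b2) :
    mt p b2 - mt p b1 ≤ (b2 - b1) * qp p := by
  have hp0' : 0 < p := by linarith
  have hI1 := integrable_mt_integrand hp0' hp1 b1
  have hI2 := integrable_mt_integrand hp0' hp1 b2
  have h1 : mt p b2 - mt p b1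
      = ∫ z : ℝ, (tp p (b2 * z) * z - tp p (b1 * z) * z) * phi1 z := by
    unfold mt
    rw [← MeasureTheory.integral_sub hI2 hI1]
    congr 1; funext z; ring
  have hIrhs : MeasureTheory.Integrable
      (fun z : ℝ => (b2 - b1) * ((z ^ 2 - (2 * p - 1) ^ 2 * max z 0 ^ 2) * phi1 z)) := by
    have := (integrable_sq_phi1.sub (integrable_max_sq_phi1.const_mul ((2 * p - 1) ^ 2))).const_mul
      (b2 - b1)
    apply this.congr
    apply Filter.Eventually.of_forall
    intro z
    simp only [Pi.sub_apply]
    ring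
  have h2 : ∫ z : ℝ, (b2 - b1) * ((z ^ 2 - (2 * p - 1) ^ 2 * max z 0 ^ 2) * phi1 z)
      = (b2 - b1) * qp p := by
    rw [MeasureTheory.integral_const_mul]
    congr 1
    have : (fun z : ℝ => (z ^ 2 - (2 * p - 1) ^ 2 * max z 0 ^ 2) * phi1 z)
        = fun z : ℝ => z ^ 2 * phi1 z - (2 * p - 1) ^ 2 * (max z 0 ^ 2 * phi1 z) := by
      funext z; ring
    rw [this, MeasureTheory.integral_sub integrable_sq_phi1
      (integrable_max_sq_phi1.const_mul _), MeasureTheory.integral_const_mul,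
      integral_sq_phi1, integral_max_sq_phi1]
    unfold qp
    ring
  rw [h1, ← h2]
  have hL : MeasureTheory.Integrable
      (fun z : ℝ => (tp p (b2 * z) * z - tp p (b1 * z) * z) * phi1 z) :=
    (hI2.sub hI1).congr (Filter.Eventually.of_forall fun z => by
      simp only [Pi.sub_apply]; ring)
  apply MeasureTheory.integral_mono hL hIrhs
  intro z
  have hkey := tp_interval_bound hp0 hp1 h0 h12 z
  have hφ := (phi1_pos z).le
  calc (tp p (b2 * z) * z - tp p (b1 * z) * z) * phi1 z
      ≤ ((b2 - b1) * (z ^ 2 - (2 * p - 1) ^ 2 * max z 0 ^ 2)) * phi1 z :=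
        mul_le_mul_of_nonneg_right hkey hφ
    _ = (b2 - b1) * ((z ^ 2 - (2 * p - 1) ^ 2 * max z 0 ^ 2) * phi1 z) := by ring
end Aux3
section Aux4
open intervalIntegral Filter MeasureTheory

variable {p : ℝ}

lemma mt_integrand_abs_le (hp0 : 0 < p) (hp1 : p < 1) (b z : ℝ) :
    ‖tp p (b * z) * z * phi1 z‖ ≤ 1 * phi1 z + 1 * (z ^ 2 * phi1 z) := by
  rw [Real.norm_eq_abs]
  have h1 := abs_tp_le_one hp0 hp1 (b * z)
  have h2 := (phi1_pos z).le
  have h3 := abs_le_one_add_sq z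
  rw [abs_mul, abs_mul, abs_of_nonneg h2]
  have h4 : |tp p (b * z)| * |z| ≤ 1 + z ^ 2 := by
    calc |tp p (b * z)| * |z| ≤ 1 * |z| :=
      mul_le_mul_of_nonneg_right h1 (abs_nonneg z)
    _ = |z| := one_mul _
    _ ≤ 1 + z ^ 2 := h3
  have h5 : |tp p (b * z)| * |z| * phi1 z ≤ (1 + z ^ 2) * phi1 z :=
    mul_le_mul_of_nonneg_right h4 h2
  linarith

lemma continuous_mt (hp0 : 0 < p) (hp1 : p < 1) : Continuous (mt p) := by
  unfold mt
  apply MeasureTheory.continuous_of_dominated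
    (bound := fun z : ℝ => 1 * phi1 z + 1 * (z ^ 2 * phi1 z))
  · exact fun b => (integrable_mt_integrand hp0 hp1 b).1
  · exact fun b => Filter.Eventually.of_forall fun z => mt_integrand_abs_le hp0 hp1 b z
  · exact integrable_bound 1 1
  · apply Filter.Eventually.of_forall
    intro z
    exact (((continuous_tp hp0 hp1).comp (continuous_id'.mul continuous_const)).mul
      continuous_const).mul continuous_const

lemma mt_zero (hp0 : 0 < p) (hp1 : p < 1) : mt p 0 = 0 := by
  unfold mt
  have h : (fun z : ℝ => tp p (0 * z) * z * phi1 z)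
      = fun z : ℝ => (2 * p - 1) * (z * phi1 z) := by
    funext z; rw [zero_mul, tp_zero hp0 hp1]; ring
  rw [h, MeasureTheory.integral_const_mul, integral_id_phi1, mul_zero]

lemma logcp_diff_bounds (hp0 : 0 < p) (hp1 : p < 1) {b1 b2 : ℝ} (h : b1 ≤ b2) (z : ℝ) :
    (b2 - b1) * (tp p (b1 * z) * z) ≤ Real.log (cp p (b2 * z)) - Real.log (cp p (b1 * z)) ∧
    Real.log (cp p (b2 * z)) - Real.log (cp p (b1 * z)) ≤ (b2 - b1) * (tp p (b2 * z) * z) := by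
  have hD : ∀ b : ℝ, HasDerivAt (fun b : ℝ => Real.log (cp p (b * z))) (tp p (b * z) * z) b :=
    fun b => hasDerivAt_logcp_b hp0 hp1 z b
  have hcont : Continuous fun b : ℝ => tp p (b * z) * z :=
    (((continuous_tp hp0 hp1).comp (continuous_id'.mul continuous_const)).mul continuous_const)
  have heq : Real.log (cp p (b2 * z)) - Real.log (cp p (b1 * z))
      = ∫ b in b1..b2, tp p (b * z) * z := by
    rw [intervalIntegral.integral_eq_sub_of_hasDerivAt (fun b _ => hD b)
      (hcont.intervalIntegrable b1 b2)]
  have hmono : ∀ b ∈ Set.Icc b1 b2,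
      tp p (b1 * z) * z ≤ tp p (b * z) * z ∧ tp p (b * z) * z ≤ tp p (b2 * z) * z := by
    intro b hb
    rcases le_total 0 z with hz | hz
    · constructor
      · exact mul_le_mul_of_nonneg_right
          (tp_mono hp0 hp1 (mul_le_mul_of_nonneg_right hb.1 hz)) hz
      · exact mul_le_mul_of_nonneg_right
          (tp_mono hp0 hp1 (mul_le_mul_of_nonneg_right hb.2 hz)) hz
    · constructor
      · have := tp_mono hp0 hp1 (mul_le_mul_of_nonpos_right hb.1 hz)
        nlinarith
      · have := tp_mono hp0 hp1 (mul_le_mul_of_nonpos_right hb.2 hz)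
        nlinarith
  constructor
  · rw [heq]
    have := intervalIntegral.integral_mono_on (μ := volume) h intervalIntegrable_const
      (hcont.intervalIntegrable b1 b2) (fun b hb => (hmono b hb).1)
    rw [intervalIntegral.integral_const, smul_eq_mul] at this
    linarith
  · rw [heq]
    have := intervalIntegral.integral_mono_on (μ := volume) h (hcont.intervalIntegrable b1 b2)
      intervalIntegrable_const (fun b hb => (hmono b hb).2)
    rw [intervalIntegral.integral_const, smul_eq_mul] at this
    linarith

lemma Lam_sub_bounds (hp0 : 0 < p) (hp1 : p < 1) {b1 b2 : ℝ} (h : b1 ≤ b2) :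
    (b2 - b1) * mt p b1 ≤ Lam p b2 - Lam p b1 ∧
    Lam p b2 - Lam p b1 ≤ (b2 - b1) * mt p b2 := by
  have hI1 := integrable_logcp hp0 hp1 b1
  have hI2 := integrable_logcp hp0 hp1 b2
  have hdiff : Lam p b2 - Lam p b1
      = ∫ z : ℝ, (Real.log (cp p (b2 * z)) - Real.log (cp p (b1 * z))) * phi1 z := by
    unfold Lam
    rw [← MeasureTheory.integral_sub hI2 hI1]
    congr 1; funext z; ring
  have hL : MeasureTheory.Integrable
      (fun z : ℝ => (Real.log (cp p (b2 * z)) - Real.log (cp p (b1 * z))) * phi1 z) :=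
    (hI2.sub hI1).congr (Filter.Eventually.of_forall fun z => by
      simp only [Pi.sub_apply]; ring)
  constructor
  · rw [hdiff]
    have hR : MeasureTheory.Integrable
        (fun z : ℝ => (b2 - b1) * (tp p (b1 * z) * z * phi1 z)) :=
      (integrable_mt_integrand hp0 hp1 b1).const_mul _
    have hle : ∀ z : ℝ, (b2 - b1) * (tp p (b1 * z) * z * phi1 z)
        ≤ (Real.log (cp p (b2 * z)) - Real.log (cp p (b1 * z))) * phi1 z := by
      intro z
      have h1 := (logcp_diff_bounds hp0 hp1 h z).1
      have h2 := (phi1_pos z).le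
      have := mul_le_mul_of_nonneg_right h1 h2
      calc (b2 - b1) * (tp p (b1 * z) * z * phi1 z)
          = (b2 - b1) * (tp p (b1 * z) * z) * phi1 z := by ring
        _ ≤ (Real.log (cp p (b2 * z)) - Real.log (cp p (b1 * z))) * phi1 z := this
    have := MeasureTheory.integral_mono hR hL hle
    rw [MeasureTheory.integral_const_mul] at this
    exact this
  · rw [hdiff]
    have hR : MeasureTheory.Integrable
        (fun z : ℝ => (b2 - b1) * (tp p (b2 * z) * z * phi1 z)) :=
      (integrable_mt_integrand hp0 hp1 b2).const_mul _
    have hle : ∀ z : ℝ, (Real.log (cp p (b2 * z)) - Real.log (cp p (b1 * z))) * phi1 z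
        ≤ (b2 - b1) * (tp p (b2 * z) * z * phi1 z) := by
      intro z
      have h1 := (logcp_diff_bounds hp0 hp1 h z).2
      have h2 := (phi1_pos z).le
      have := mul_le_mul_of_nonneg_right h1 h2
      calc (Real.log (cp p (b2 * z)) - Real.log (cp p (b1 * z))) * phi1 z
          ≤ (b2 - b1) * (tp p (b2 * z) * z) * phi1 z := this
        _ = (b2 - b1) * (tp p (b2 * z) * z * phi1 z) := by ring
    have := MeasureTheory.integral_mono hL hR hle
    rw [MeasureTheory.integral_const_mul] at this
    exact this

lemma hasDerivAt_Lam (hp0 : 0 < p) (hp1 : p < 1) (b : ℝ) :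
    HasDerivAt (Lam p) (mt p b) b := by
  rw [hasDerivAt_iff_tendsto_slope]
  have key : ∀ c : ℝ, c ≠ b →
      min (mt p b) (mt p c) ≤ slope (Lam p) b c ∧
      slope (Lam p) b c ≤ max (mt p b) (mt p c) := by
    intro c hc
    rw [slope_def_field]
    rcases lt_or_gt_of_ne hc with hlt | hgt
    · -- c < b
      have hs := Lam_sub_bounds hp0 hp1 hlt.le
      have hd : c - b < 0 := by linarith
      constructor
      · rw [le_div_iff_of_neg hd]
        have h1 := mul_le_mul_of_nonpos_right (min_le_right (mt p b) (mt p c)) hd.le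
        linarith [hs.1, h1]
      · rw [div_le_iff_of_neg hd]
        have h1 := mul_le_mul_of_nonpos_right (le_max_left (mt p b) (mt p c)) hd.le
        linarith [hs.2, h1]
    · -- b < c
      have hs := Lam_sub_bounds hp0 hp1 hgt.le
      have hd : 0 < c - b := by linarith
      constructor
      · rw [le_div_iff₀ hd]
        have h1 := mul_le_mul_of_nonneg_right (min_le_left (mt p b) (mt p c)) hd.le
        linarith [hs.1, h1]
      · rw [div_le_iff₀ hd]
        have h1 := mul_le_mul_of_nonneg_right (le_max_right (mt p b) (mt p c)) hd.le
        linarith [hs.2, h1]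
  have hmin : Tendsto (fun c => min (mt p b) (mt p c)) (nhdsWithin b {b}ᶜ) (nhds (mt p b)) := by
    have h1 : Tendsto (fun c => min (mt p b) (mt p c)) (nhds b)
        (nhds (min (mt p b) (mt p b))) :=
      (continuous_const.min (continuous_mt hp0 hp1)).tendsto b
    rw [min_self] at h1
    exact h1.mono_left nhdsWithin_le_nhds
  have hmax : Tendsto (fun c => max (mt p b) (mt p c)) (nhdsWithin b {b}ᶜ) (nhds (mt p b)) := by
    have h1 : Tendsto (fun c => max (mt p b) (mt p c)) (nhds b)
        (nhds (max (mt p b) (mt p b))) :=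
      (continuous_const.max (continuous_mt hp0 hp1)).tendsto b
    rw [max_self] at h1
    exact h1.mono_left nhdsWithin_le_nhds
  refine tendsto_of_tendsto_of_tendsto_of_le_of_le' hmin hmax ?_ ?_
  · filter_upwards [self_mem_nhdsWithin] with c hc
    exact (key c hc).1
  · filter_upwards [self_mem_nhdsWithin] with c hc
    exact (key c hc).2

end Aux4
/-- `a(θ) = θ/(1-θ²/d)`. -/
noncomputable def aFun (d : ℕ) (θ : ℝ) : ℝ := θ / (1 - θ ^ 2 / d)

/-- `g(θ) = (1+θ²/d)/(1-θ²/d)²`. -/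
noncomputable def gFun (d : ℕ) (θ : ℝ) : ℝ := (1 + θ ^ 2 / d) / (1 - θ ^ 2 / d) ^ 2

/-- The explicit part of `ℓ`. -/
noncomputable def Afun (d : ℕ) (θ : ℝ) : ℝ :=
  (d / 2 : ℝ) * Real.log (2 * π * (1 - θ ^ 2 / d)) + ((d : ℝ) + θ ^ 2) / (2 * (1 - θ ^ 2 / d))

section Aux5
open intervalIntegral Filter MeasureTheory

variable {p : ℝ} {d : ℕ}

lemma hasDerivAt_r (d : ℕ) (θ : ℝ) :
    HasDerivAt (fun θ : ℝ => 1 - θ ^ 2 / (d : ℝ)) (-(2 * θ / d)) θ := by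
  have h1 : HasDerivAt (fun θ : ℝ => θ ^ 2) (2 * θ) θ := by
    simpa using hasDerivAt_pow 2 θ
  have h2 := (h1.div_const (d : ℝ)).const_sub 1
  convert h2 using 1

lemma hasDerivAt_aFun (θ : ℝ) (hr : 1 - θ ^ 2 / (d : ℝ) ≠ 0) :
    HasDerivAt (aFun d) (gFun d θ) θ := by
  have h := (hasDerivAt_id θ).div (hasDerivAt_r d θ) hr
  unfold aFun gFun
  refine h.congr_deriv ?_
  simp only [id_eq]
  ring

lemma hasDerivAt_Afun (θ : ℝ) (hd0 : (0:ℝ) < d) (hr : 0 < 1 - θ ^ 2 / (d : ℝ)) :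
    HasDerivAt (Afun d) (θ * gFun d θ) θ := by
  have hπ : (0:ℝ) < π := Real.pi_pos
  have hin : HasDerivAt (fun θ : ℝ => 2 * π * (1 - θ ^ 2 / (d : ℝ)))
      (2 * π * (-(2 * θ / d))) θ := (hasDerivAt_r d θ).const_mul (2 * π)
  have hlogpos : (0:ℝ) < 2 * π * (1 - θ ^ 2 / (d : ℝ)) := by positivity
  have hlog := (hin.log hlogpos.ne').const_mul ((d : ℝ) / 2)
  have hnum : HasDerivAt (fun θ : ℝ => (d : ℝ) + θ ^ 2) (2 * θ) θ := by
    have h1 : HasDerivAt (fun θ : ℝ => θ ^ 2) (2 * θ) θ := by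
      simpa using hasDerivAt_pow 2 θ
    simpa using h1.const_add (d : ℝ)
  have hden : HasDerivAt (fun θ : ℝ => 2 * (1 - θ ^ 2 / (d : ℝ))) (2 * (-(2 * θ / d))) θ :=
    (hasDerivAt_r d θ).const_mul 2
  have hdenne : 2 * (1 - θ ^ 2 / (d : ℝ)) ≠ 0 := by positivity
  have hdiv := hnum.div hden hdenne
  have h := hlog.add hdiv
  unfold Afun gFun
  refine h.congr_deriv ?_
  have hdne : (d : ℝ) ≠ 0 := hd0.ne'
  have hu : (0:ℝ) < (d : ℝ) - θ ^ 2 := by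
    have := mul_pos hr hd0
    have heq : (1 - θ ^ 2 / (d : ℝ)) * (d : ℝ) = (d : ℝ) - θ ^ 2 := by
      field_simp
    linarith [heq ▸ this]
  have hr2 : 1 - θ ^ 2 / (d : ℝ) = ((d : ℝ) - θ ^ 2) / (d : ℝ) := by
    field_simp
  rw [hr2]
  have hune : (d : ℝ) - θ ^ 2 ≠ 0 := hu.ne'
  field_simp
  ring

lemma ell_eq (p : ℝ) (d : ℕ) (θ : ℝ) : ell p d θ = Afun d θ - Lam p (aFun d θ) := by
  have hfun : (fun z : ℝ => Real.log (cp p (θ * z / (1 - θ ^ 2 / (d : ℝ)))) * phi1 z)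
      = fun z : ℝ => Real.log (cp p (θ / (1 - θ ^ 2 / (d : ℝ)) * z)) * phi1 z := by
    funext z
    rw [show θ * z / (1 - θ ^ 2 / (d : ℝ)) = θ / (1 - θ ^ 2 / (d : ℝ)) * z from by ring]
  unfold ell Afun Lam gexp aFun
  rw [hfun]

lemma m_eq (p : ℝ) (d : ℕ) (θ : ℝ) : m p d θ = mt p (aFun d θ) := by
  have hfun : (fun z : ℝ => tp p (θ * z / (1 - θ ^ 2 / (d : ℝ))) * z * phi1 z)
      = fun z : ℝ => tp p (θ / (1 - θ ^ 2 / (d : ℝ)) * z) * z * phi1 z := by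
    funext z
    rw [show θ * z / (1 - θ ^ 2 / (d : ℝ)) = θ / (1 - θ ^ 2 / (d : ℝ)) * z from by ring]
  unfold m gexp mt aFun
  rw [hfun]

lemma q_gt (hp1 : 1/2 < p) (hp2 : p < 1) : 1/2 < qp p ∧ qp p < 1 := by
  unfold qp
  constructor <;> nlinarith

lemma gFun_nonneg (θ : ℝ) : 0 ≤ gFun d θ := by
  unfold gFun
  have : (0:ℝ) ≤ θ ^ 2 / (d : ℝ) := by positivity
  have h2 : (0:ℝ) ≤ 1 + θ ^ 2 / (d : ℝ) := by linarith
  positivity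

lemma gFun_mono (hd0 : (0:ℝ) < d) {θ1 θ2 : ℝ} (h0 : 0 ≤ θ1) (h12 : θ1 ≤ θ2)
    (h2 : θ2 ^ 2 / (d : ℝ) < 1) : gFun d θ1 ≤ gFun d θ2 := by
  unfold gFun
  set s1 := θ1 ^ 2 / (d : ℝ) with hs1def
  set s2 := θ2 ^ 2 / (d : ℝ) with hs2def
  have hs1 : 0 ≤ s1 := by positivity
  have hs12 : s1 ≤ s2 := by
    rw [hs1def, hs2def, div_le_div_iff_of_pos_right hd0]
    nlinarith
  have hs2lt : s2 < 1 := h2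
  have hs1lt : s1 < 1 := lt_of_le_of_lt hs12 hs2lt
  rw [div_le_div_iff₀ (pow_pos (by linarith) 2) (pow_pos (by linarith) 2)]
  nlinarith [mul_nonneg (sub_nonneg.2 hs12)
    (show (0:ℝ) ≤ 3 - s1 - s2 - s1 * s2 by nlinarith)]

/-- The algebraic consequences of `θ ∈ [0, θ0]`, `θ0 < θmax`. -/
lemma s_bound (hp1 : 1/2 < p) (hp2 : p < 1) (hd : 1 ≤ d) {θ0 θ : ℝ}
    (hθ0 : θ0 < θmax p d) (hθ : θ ∈ Set.Icc (0:ℝ) θ0) :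
    0 < 1 - θ ^ 2 / (d : ℝ) ∧ qp p * gFun d θ ≤ 1 := by
  obtain ⟨hq1, hq2⟩ := q_gt hp1 hp2
  set q := qp p with hqdef
  set E := Real.sqrt (8 * q + q ^ 2) with hEdef
  have hd0 : (0:ℝ) < d := by
    have : (1:ℝ) ≤ (d:ℝ) := by exact_mod_cast hd
    linarith
  have hE2 : E ^ 2 = 8 * q + q ^ 2 := Real.sq_sqrt (by nlinarith)
  have hEnn : 0 ≤ E := Real.sqrt_nonneg _
  have hEq : q < E := by nlinarith [hE2, hEnn]
  have hEle : E ≤ 2 + q := by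
    nlinarith [hE2, hEnn]
  have hin : 0 ≤ (d:ℝ) * (2 + q - E) / 2 := by
    have h1 : 0 ≤ 2 + q - E := by linarith
    positivity
  have hmax2 : θmax p d ^ 2 = (d:ℝ) * (2 + q - E) / 2 := by
    unfold θmax
    rw [← hqdef, ← hEdef]
    exact Real.sq_sqrt hin
  have hθ0nn : 0 ≤ θ0 := le_trans hθ.1 hθ.2
  have hθmaxpos : 0 < θmax p d := lt_of_le_of_lt hθ0nn hθ0
  have hθ02 : θ0 ^ 2 < θmax p d ^ 2 := by nlinarith
  have hθ2 : θ ^ 2 ≤ θ0 ^ 2 := by nlinarith [hθ.1, hθ.2]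
  have hslt : θ ^ 2 / (d:ℝ) < (2 + q - E) / 2 := by
    rw [div_lt_div_iff₀ hd0 (by norm_num : (0:ℝ) < 2)]
    calc θ ^ 2 * 2 ≤ θ0 ^ 2 * 2 := by linarith
      _ < θmax p d ^ 2 * 2 := by linarith
      _ = (d:ℝ) * (2 + q - E) / 2 * 2 := by rw [hmax2]
      _ = (2 + q - E) * (d:ℝ) := by ring
  set s := θ ^ 2 / (d:ℝ) with hsdef
  have hs0 : 0 ≤ s := by positivity
  have hs1 : s < 1 := by
    have : (2 + q - E) / 2 < 1 := by linarith
    linarith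
  refine ⟨by linarith, ?_⟩
  unfold gFun
  rw [← hsdef]
  have hkey : q * (1 + s) ≤ (1 - s) ^ 2 := by
    have h1 : 0 ≤ (2 + q - E) / 2 - s := by linarith
    have h2 : 0 ≤ (2 + q + E) / 2 - s := by linarith
    nlinarith [mul_nonneg h1 h2, hE2]
  have hden : (0:ℝ) < (1 - s) ^ 2 := pow_pos (by linarith) 2
  rw [show q * ((1 + s) / (1 - s) ^ 2) = q * (1 + s) / (1 - s) ^ 2 from by ring,
    div_le_one hden]
  exact hkey

end Aux5
/-- `ℓ` is convex on `[0, θ₀]`. -/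
theorem ell_convex
    (p : ℝ) (hp : p ∈ Set.Ioo (1 / 2 : ℝ) 1) (d : ℕ) (hd : 1 ≤ d)
    (θ0 : ℝ) (hθ0 : θ0 < θmax p d) :
    ConvexOn ℝ (Set.Icc (0 : ℝ) θ0) (ell p d) := by
  obtain ⟨hp1, hp2⟩ := hp
  have hp0 : 0 < p := by linarith
  have hd0 : (0:ℝ) < d := by
    have : (1:ℝ) ≤ (d:ℝ) := by exact_mod_cast hd
    linarith
  have hfacts : ∀ θ ∈ Set.Icc (0:ℝ) θ0, 0 < 1 - θ ^ 2 / (d:ℝ) ∧ qp p * gFun d θ ≤ 1 :=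
    fun θ hθ => s_bound hp1 hp2 hd hθ0 hθ
  have hderiv : ∀ θ ∈ Set.Icc (0:ℝ) θ0,
      HasDerivAt (ell p d) (gFun d θ * (θ - m p d θ)) θ := by
    intro θ hθ
    have hr := (hfacts θ hθ).1
    have hL : ell p d = fun θ => Afun d θ - Lam p (aFun d θ) := funext (ell_eq p d)
    rw [hL]
    have hA := hasDerivAt_Afun θ hd0 hr
    have ha := hasDerivAt_aFun θ hr.ne'
    have hLam := (hasDerivAt_Lam hp0 hp2 (aFun d θ)).comp θ ha
    have h5 := hA.sub hLam
    refine h5.congr_deriv ?_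
    rw [m_eq]
    ring
  have hstep : ∀ θ1 θ2, θ1 ∈ Set.Icc (0:ℝ) θ0 → θ2 ∈ Set.Icc (0:ℝ) θ0 → θ1 ≤ θ2 →
      m p d θ2 - m p d θ1 ≤ θ2 - θ1 := by
    intro θ1 θ2 h1 h2 h12
    have hmemt : ∀ t ∈ Set.Icc θ1 θ2, t ∈ Set.Icc (0:ℝ) θ0 := fun t ht =>
      ⟨le_trans h1.1 ht.1, le_trans ht.2 h2.2⟩
    have hgcont : ContinuousOn (gFun d) (Set.uIcc θ1 θ2) := by
      rw [Set.uIcc_of_le h12]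
      apply ContinuousOn.div
      · exact (continuous_const.add ((continuous_pow 2).div_const _)).continuousOn
      · exact ((continuous_const.sub ((continuous_pow 2).div_const _)).pow 2).continuousOn
      · intro t ht
        exact pow_ne_zero 2 (hfacts t (hmemt t ht)).1.ne'
    have hgint : IntervalIntegrable (gFun d) MeasureTheory.volume θ1 θ2 :=
      hgcont.intervalIntegrable
    have hFTC : aFun d θ2 - aFun d θ1 = ∫ t in θ1..θ2, gFun d t := by
      rw [intervalIntegral.integral_eq_sub_of_hasDerivAt
        (fun t ht => hasDerivAt_aFun t (by
          rw [Set.uIcc_of_le h12] at ht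
          exact (hfacts t (hmemt t ht)).1.ne')) hgint]
    have hqa : qp p * (aFun d θ2 - aFun d θ1) ≤ θ2 - θ1 := by
      rw [hFTC, ← intervalIntegral.integral_const_mul]
      have h3 := intervalIntegral.integral_mono_on (μ := MeasureTheory.volume) h12
        (hgint.const_mul (qp p)) intervalIntegrable_const
        (fun t ht => (hfacts t (hmemt t ht)).2)
      rw [intervalIntegral.integral_const, smul_eq_mul, mul_one] at h3
      exact h3
    have ha0 : 0 ≤ aFun d θ1 := div_nonneg h1.1 (hfacts θ1 h1).1.le
    have ha12 : aFun d θ1 ≤ aFun d θ2 := by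
      have hnn : 0 ≤ ∫ t in θ1..θ2, gFun d t :=
        intervalIntegral.integral_nonneg h12 (fun t _ => gFun_nonneg t)
      rw [← hFTC] at hnn
      linarith
    have hmt := mt_diff_le hp1 hp2 ha0 ha12
    rw [m_eq, m_eq]
    calc mt p (aFun d θ2) - mt p (aFun d θ1) ≤ (aFun d θ2 - aFun d θ1) * qp p := hmt
      _ ≤ θ2 - θ1 := by linarith
  have hGmono : ∀ x ∈ Set.Icc (0:ℝ) θ0, ∀ y ∈ Set.Icc (0:ℝ) θ0, x ≤ y →
      gFun d x * (x - m p d x) ≤ gFun d y * (y - m p d y) := by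
    intro x hx y hy hxy
    have h0mem : (0:ℝ) ∈ Set.Icc (0:ℝ) θ0 := ⟨le_refl 0, le_trans hx.1 hx.2⟩
    have hm0 : m p d 0 = 0 := by
      rw [m_eq]
      have ha : aFun d 0 = 0 := by unfold aFun; simp
      rw [ha, mt_zero hp0 hp2]
    have hx0 : 0 ≤ x - m p d x := by
      have h := hstep 0 x h0mem hx hx.1
      rw [hm0] at h
      linarith
    have hxy2 : x - m p d x ≤ y - m p d y := by
      have := hstep x y hx hy hxy
      linarith
    have hgy : 0 ≤ gFun d y := gFun_nonneg y
    have hsy : y ^ 2 / (d:ℝ) < 1 := by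
      have := (hfacts y hy).1; linarith
    have hgxy : gFun d x ≤ gFun d y := gFun_mono hd0 hx.1 hxy hsy
    exact mul_le_mul hgxy hxy2 hx0 hgy
  apply MonotoneOn.convexOn_of_deriv (convex_Icc _ _)
  · exact fun θ hθ => ((hderiv θ hθ).continuousAt).continuousWithinAt
  · intro θ hθ
    rw [interior_Icc] at hθ
    exact ((hderiv θ (Set.Ioo_subset_Icc_self hθ)).differentiableAt).differentiableWithinAt
  · intro x hx y hy hxy
    rw [interior_Icc] at hx hy
    rw [(hderiv x (Set.Ioo_subset_Icc_self hx)).deriv,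
      (hderiv y (Set.Ioo_subset_Icc_self hy)).deriv]
    exact hGmono x (Set.Ioo_subset_Icc_self hx) y (Set.Ioo_subset_Icc_self hy) hxy

end OMDA
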